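/- Let d ∈ {1,2,3,7,11} and suppose z = [a₀; a₁, a₂, …] with all a_n ∈ ℤ[ω_d] is a geodesic continued fraction expansion (finite or infinite). Then for every n ≥ 1 for which the relevant partial quotients exist: (i) |a_n| ≠ 1; (ii) if |a_n| = √2 then a_{n+1} ≠ −conj(a_n); (iii) if a_n = 2ζ for a unit ζ of ℤ[ω_d] then a_{n+1} ≠ −2·conj(ζ). -/

import Mathlib

/-!
Every excluded digit pattern yields a shortcut in the Farey graph. With `Pₖ = (pₖ, qₖ)` we have
`det(Pₖ₋₁, Pₖ) = ±1` and `Pₖ₊₁ = aₖ₊₁Pₖ + Pₖ₋₁`, hence `det(Pₙ₋₂, Pₙ) = ±aₙ` and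
`det(Pₙ₋₂, Pₙ₊₁) = ±(1 + aₙaₙ₊₁)`. So if `|aₙ| = 1`, then `Pₙ₋₂` and `Pₙ` are Farey neighbours;
if `|aₙ| = √2` and `aₙ₊₁ = −conj aₙ`, then `aₙaₙ₊₁ = −2` and `Pₙ₋₂`, `Pₙ₊₁` are neighbours;
if `aₙ = 2ζ` and `aₙ₊₁ = −2 conj ζ`, then `ζPₙ₋₁ + Pₙ₋₂` is a common neighbour of `Pₙ₋₂` and
`Pₙ₊₁`. Either way the walk along the convergents is not geodesic.
-/

/-- `ω_d`: the generator of the ring of integers of `ℚ(√(-d))`. -/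
noncomputable def omegaD (d : ℕ) : ℂ :=
  if d % 4 = 3 then (1 + Complex.I * Real.sqrt d) / 2 else Complex.I * Real.sqrt d

/-- The ring of integers `ℤ[ω_d]` of `ℚ(√(-d))`, as a subset of `ℂ`. -/
def ringInt (d : ℕ) : Set ℂ := {z | ∃ a b : ℤ, z = (a : ℂ) + (b : ℂ) * omegaD d}

/-- `p` and `q` are coprime in `ℤ[ω_d]`. -/
def CoprimeIn (d : ℕ) (p q : ℂ) : Prop :=
  ∃ u v : ℂ, u ∈ ringInt d ∧ v ∈ ringInt d ∧ u * p + v * q = 1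

/-- `x` is an element of the field `ℚ(√(-d)) ⊆ ℂ`. -/
def inK (d : ℕ) (x : ℂ) : Prop :=
  ∃ p q : ℂ, p ∈ ringInt d ∧ q ∈ ringInt d ∧ q ≠ 0 ∧ x = p / q

/-- The point `p/q` of `ℂ ∪ {∞}`, with `p/0 = ∞`. -/
noncomputable def divC (p q : ℂ) : OnePoint ℂ :=
  if q = 0 then OnePoint.infty else ((p / q : ℂ) : OnePoint ℂ)

/-- Two points of `ℚ(√(-d)) ∪ {∞}` are Farey neighbours (joined by an edge of
the Farey graph `E_d`) if they have coprime representations `p₁/q₁`, `p₂/q₂`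
with `|p₁q₂ − p₂q₁| = 1`. -/
def FareyAdj (d : ℕ) (x y : OnePoint ℂ) : Prop :=
  ∃ p₁ q₁ p₂ q₂ : ℂ, p₁ ∈ ringInt d ∧ q₁ ∈ ringInt d ∧ p₂ ∈ ringInt d ∧ q₂ ∈ ringInt d ∧
    CoprimeIn d p₁ q₁ ∧ CoprimeIn d p₂ q₂ ∧ x = divC p₁ q₁ ∧ y = divC p₂ q₂ ∧
    ‖p₁ * q₂ - p₂ * q₁‖ = 1

/-- `f 0 → f 1 → ⋯ → f n` is a walk (of length `n`) in the Farey graph `E_d`. -/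
def IsWalk (d n : ℕ) (f : ℕ → OnePoint ℂ) : Prop := ∀ k, k < n → FareyAdj d (f k) (f (k + 1))

/-- `f 0 → ⋯ → f n` is a geodesic path in `E_d`: a walk of minimal length
among all walks with the same endpoints. -/
def IsGeodesicWalk (d n : ℕ) (f : ℕ → OnePoint ℂ) : Prop :=
  IsWalk d n f ∧ ∀ (m : ℕ) (g : ℕ → OnePoint ℂ), IsWalk d m g → g 0 = f 0 → g m = f n → n ≤ m

/-- Numerators of the convergents of `[a₁, a₂, …]` (`a 0` is unused):
`p₀ = 0`, `p₁ = 1`, `p_k = a_k p_{k−1} + p_{k−2}`. -/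
noncomputable def cfP (a : ℕ → ℂ) : ℕ → ℂ
  | 0 => 0
  | 1 => 1
  | (k + 2) => a (k + 2) * cfP a (k + 1) + cfP a k

/-- Denominators of the convergents of `[a₁, a₂, …]`:
`q₀ = 1`, `q₁ = a₁`, `q_k = a_k q_{k−1} + q_{k−2}`. -/
noncomputable def cfQ (a : ℕ → ℂ) : ℕ → ℂ
  | 0 => 1
  | 1 => a 1
  | (k + 2) => a (k + 2) * cfQ a (k + 1) + cfQ a k

/-- The walk `∞ → p₀/q₀ = 0 → p₁/q₁ → ⋯` along the convergents of `[a₁, a₂, …]`. -/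
noncomputable def cfWalk (a : ℕ → ℂ) : ℕ → OnePoint ℂ :=
  fun k => if k = 0 then OnePoint.infty else divC (cfP a (k - 1)) (cfQ a (k - 1))

/-- Numerators of the convergents of `[a₀; a₁, a₂, …]`:
`p₀ = a₀`, `p₁ = a₁a₀ + 1` (with `p₋₁ = 1`), `p_k = a_k p_{k−1} + p_{k−2}`. -/
noncomputable def cfP0 (a : ℕ → ℂ) : ℕ → ℂ
  | 0 => a 0
  | 1 => a 1 * a 0 + 1
  | (k + 2) => a (k + 2) * cfP0 a (k + 1) + cfP0 a k

/-- Denominators of the convergents of `[a₀; a₁, a₂, …]`: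
`q₀ = 1`, `q₁ = a₁` (with `q₋₁ = 0`), `q_k = a_k q_{k−1} + q_{k−2}`. -/
noncomputable def cfQ0 (a : ℕ → ℂ) : ℕ → ℂ
  | 0 => 1
  | 1 => a 1
  | (k + 2) => a (k + 2) * cfQ0 a (k + 1) + cfQ0 a k

/-- The walk `∞ → p₀/q₀ → p₁/q₁ → ⋯` along the convergents of `[a₀; a₁, …]`. -/
noncomputable def cfWalk0 (a : ℕ → ℂ) : ℕ → OnePoint ℂ :=
  fun k => if k = 0 then OnePoint.infty else divC (cfP0 a (k - 1)) (cfQ0 a (k - 1))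

/-- A unit of the ring `ℤ[ω_d]`. -/
def IsUnitIn (d : ℕ) (ζ : ℂ) : Prop := ζ ∈ ringInt d ∧ ∃ η ∈ ringInt d, ζ * η = 1

open ComplexConjugate

lemma exists_int_omegaD_add_conj_and_mul_conj (d : ℕ) :
    ∃ t n : ℤ, omegaD d + conj (omegaD d) = t ∧ omegaD d * conj (omegaD d) = n := by
  have hsqrt : ((Real.sqrt d : ℂ)) ^ 2 = d := by
    rw [← Complex.ofReal_pow, Real.sq_sqrt (Nat.cast_nonneg d), Complex.ofReal_natCast]
  by_cases h : d % 4 = 3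
  · obtain ⟨k, hk⟩ : ∃ k : ℕ, d + 1 = 4 * k := ⟨(d + 1) / 4, by omega⟩
    have hk' : (d : ℂ) + 1 = 4 * k := by exact_mod_cast hk
    refine ⟨1, k, ?_, ?_⟩ <;> simp only [omegaD, if_pos h, map_div₀, map_add, map_one,
      map_mul, Complex.conj_I, Complex.conj_ofReal, map_ofNat] <;> push_cast
    · ring
    · linear_combination (-(Real.sqrt d : ℂ) ^ 2 / 4) * Complex.I_sq + hsqrt / 4 + hk' / 4
  · refine ⟨0, d, ?_, ?_⟩ <;> simp only [omegaD, if_neg h, map_mul, Complex.conj_I,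
      Complex.conj_ofReal] <;> push_cast
    · ring
    · linear_combination (-(Real.sqrt d : ℂ) ^ 2) * Complex.I_sq + hsqrt

def ringIntSubring (d : ℕ) : Subring ℂ where
  carrier := ringInt d
  zero_mem' := ⟨0, 0, by simp⟩
  one_mem' := ⟨1, 0, by simp⟩
  add_mem' := by
    rintro _ _ ⟨a, b, rfl⟩ ⟨c, e, rfl⟩
    exact ⟨a + c, b + e, by push_cast; ring⟩
  neg_mem' := by
    rintro _ ⟨a, b, rfl⟩
    exact ⟨-a, -b, by push_cast; ring⟩
  mul_mem' := by
    obtain ⟨t, n, ht, hn⟩ := exists_int_omegaD_add_conj_and_mul_conj d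
    rintro _ _ ⟨a, b, rfl⟩ ⟨c, e, rfl⟩
    refine ⟨a * c - b * e * n, a * e + b * c + b * e * t, ?_⟩
    push_cast
    linear_combination (b * e : ℂ) * (omegaD d * ht - hn)

lemma conj_mem_ringInt {d : ℕ} {x : ℂ} (hx : x ∈ ringInt d) : conj x ∈ ringInt d := by
  obtain ⟨t, n, ht, -⟩ := exists_int_omegaD_add_conj_and_mul_conj d
  obtain ⟨a, b, rfl⟩ := hx
  refine ⟨a + b * t, -b, ?_⟩
  simp only [map_add, map_mul, map_intCast]
  push_cast
  linear_combination (b : ℂ) * ht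

lemma exists_int_normSq_eq {d : ℕ} {x : ℂ} (hx : x ∈ ringInt d) :
    ∃ n : ℤ, Complex.normSq x = n := by
  obtain ⟨t, n, ht, hn⟩ := exists_int_omegaD_add_conj_and_mul_conj d
  obtain ⟨a, b, rfl⟩ := hx
  refine ⟨a ^ 2 + a * b * t + b ^ 2 * n, ?_⟩
  apply Complex.ofReal_injective
  rw [← Complex.mul_conj]
  simp only [map_add, map_mul, map_intCast]
  push_cast
  linear_combination (a * b : ℂ) * ht + (b : ℂ) ^ 2 * hn

lemma IsUnitIn.norm_eq_one {d : ℕ} {ζ : ℂ} (h : IsUnitIn d ζ) : ‖ζ‖ = 1 := by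
  obtain ⟨hζ, η, hη, hζη⟩ := h
  obtain ⟨m, hm⟩ := exists_int_normSq_eq hζ
  obtain ⟨n, hn⟩ := exists_int_normSq_eq hη
  have hmn : m * n = 1 := by
    have := congrArg Complex.normSq hζη
    rw [map_mul, hm, hn, map_one] at this
    exact_mod_cast this
  have hm1 : m = 1 :=
    Int.eq_one_of_mul_eq_one_right (by exact_mod_cast hm ▸ Complex.normSq_nonneg ζ) hmn
  rw [← pow_eq_one_iff_of_nonneg (norm_nonneg ζ) two_ne_zero, Complex.sq_norm, hm, hm1,
    Int.cast_one]

/-- The determinant `p₁q₂ − p₂q₁` is a unit, so it certifies both coprimalities. -/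
lemma fareyAdj_divC {d : ℕ} {p₁ q₁ p₂ q₂ : ℂ} (hp₁ : p₁ ∈ ringInt d) (hq₁ : q₁ ∈ ringInt d)
    (hp₂ : p₂ ∈ ringInt d) (hq₂ : q₂ ∈ ringInt d) (h : ‖p₁ * q₂ - p₂ * q₁‖ = 1) :
    FareyAdj d (divC p₁ q₁) (divC p₂ q₂) := by
  set δ := p₁ * q₂ - p₂ * q₁
  have hδ_mem : conj δ ∈ ringInt d := conj_mem_ringInt <|
    (ringIntSubring d).sub_mem ((ringIntSubring d).mul_mem hp₁ hq₂)
      ((ringIntSubring d).mul_mem hp₂ hq₁)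
  have hδδ : conj δ * δ = 1 := by
    rw [mul_comm, RCLike.mul_conj, h]; norm_num
  have hmul {x : ℂ} (hx : x ∈ ringInt d) : conj δ * x ∈ ringInt d :=
    (ringIntSubring d).mul_mem hδ_mem hx
  exact ⟨p₁, q₁, p₂, q₂, hp₁, hq₁, hp₂, hq₂,
    ⟨conj δ * q₂, -(conj δ * p₂), hmul hq₂, (ringIntSubring d).neg_mem (hmul hp₂),
      by linear_combination hδδ⟩,
    ⟨-(conj δ * q₁), conj δ * p₁, (ringIntSubring d).neg_mem (hmul hq₁), hmul hp₁,
      by linear_combination hδδ⟩, rfl, rfl, h⟩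

/-- `convNum a k / convDen a k` is the `k`-th vertex of `cfWalk0 a`: the index is shifted by one
against `cfP0`, `cfQ0`, so that `k = 0` gives `p₋₁/q₋₁ = 1/0 = ∞`. -/
noncomputable def convNum (a : ℕ → ℂ) : ℕ → ℂ
  | 0 => 1
  | k + 1 => cfP0 a k

noncomputable def convDen (a : ℕ → ℂ) : ℕ → ℂ
  | 0 => 0
  | k + 1 => cfQ0 a k

section Convergents

variable (a : ℕ → ℂ)

lemma convNum_add_two (k : ℕ) :
    convNum a (k + 2) = a (k + 1) * convNum a (k + 1) + convNum a k := by
  cases k <;> simp [convNum, cfP0]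

lemma convDen_add_two (k : ℕ) :
    convDen a (k + 2) = a (k + 1) * convDen a (k + 1) + convDen a k := by
  cases k <;> simp [convDen, cfQ0]

lemma cfWalk0_eq_divC (k : ℕ) : cfWalk0 a k = divC (convNum a k) (convDen a k) := by
  cases k with
  | zero => simp [cfWalk0, convDen, divC]
  | succ k => simp [cfWalk0, convNum, convDen]

lemma convNum_convDen_mem_ringInt {d : ℕ} :
    ∀ k, (∀ j < k, a j ∈ ringInt d) → convNum a k ∈ ringInt d ∧ convDen a k ∈ ringInt d
  | 0, _ => ⟨(ringIntSubring d).one_mem, (ringIntSubring d).zero_mem⟩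
  | 1, ha => ⟨by simpa [convNum, cfP0] using ha 0 one_pos, (ringIntSubring d).one_mem⟩
  | k + 2, ha => by
    obtain ⟨hp₁, hq₁⟩ := convNum_convDen_mem_ringInt (k + 1) fun j hj => ha j (by omega)
    obtain ⟨hp₀, hq₀⟩ := convNum_convDen_mem_ringInt k fun j hj => ha j (by omega)
    have hak : a (k + 1) ∈ ringIntSubring d := ha (k + 1) (by omega)
    rw [convNum_add_two, convDen_add_two]
    exact ⟨add_mem (mul_mem hak hp₁) hp₀, add_mem (mul_mem hak hq₁) hq₀⟩

noncomputable def cfDet (j k : ℕ) : ℂ := convNum a j * convDen a k - convNum a k * convDen a j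

lemma cfDet_add_one (k : ℕ) : cfDet a k (k + 1) = (-1) ^ k := by
  induction k with
  | zero => simp [cfDet, convNum, convDen, cfP0, cfQ0]
  | succ k ih =>
    simp only [cfDet] at ih ⊢
    rw [convNum_add_two, convDen_add_two, pow_succ]
    linear_combination -ih

lemma cfDet_add_two (k : ℕ) : cfDet a k (k + 2) = a (k + 1) * (-1) ^ k := by
  rw [← cfDet_add_one]
  simp only [cfDet, convNum_add_two, convDen_add_two]
  ring

lemma cfDet_add_three (k : ℕ) :
    cfDet a k (k + 3) = (1 + a (k + 1) * a (k + 2)) * (-1) ^ k := by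
  rw [← cfDet_add_one]
  simp only [cfDet, convNum_add_two, convDen_add_two]
  ring

end Convergents

section Walks

variable {d : ℕ}

lemma IsWalk.mono {n m : ℕ} {f : ℕ → OnePoint ℂ} (hf : IsWalk d n f) (hmn : m ≤ n) :
    IsWalk d m f :=
  fun k hk => hf k (hk.trans_le hmn)

lemma IsWalk.append {i l : ℕ} {f g : ℕ → OnePoint ℂ} (hf : IsWalk d i f) (hg : IsWalk d l g)
    (h : f i = g 0) : IsWalk d (i + l) fun k => if k ≤ i then f k else g (k - i) := by
  intro k hk
  rcases lt_or_ge k i with hki | hik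
  · simpa [hki.le, Nat.succ_le_of_lt hki] using hf k hki
  · obtain ⟨j, rfl⟩ := Nat.exists_eq_add_of_le hik
    simp only
    rw [if_neg (by omega : ¬i + j + 1 ≤ i), show i + j + 1 - i = j + 1 by omega]
    split_ifs with hj
    · obtain rfl : j = 0 := by omega
      simpa [h] using hg 0 (by omega)
    · rw [Nat.add_sub_cancel_left]
      exact hg j (by omega)

lemma IsGeodesicWalk.le_add_of_isWalk {n i l : ℕ} {f g : ℕ → OnePoint ℂ}
    (hf : IsGeodesicWalk d n f) (hi : i ≤ n) (hg : IsWalk d l g) (h₀ : g 0 = f i)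
    (hl : g l = f n) : n ≤ i + l := by
  refine hf.2 _ _ ((hf.1.mono hi).append hg h₀.symm) (by simp) ?_
  rcases l with _ | l
  · simp [← h₀, hl]
  · simp [hl]

lemma IsGeodesicWalk.not_fareyAdj {n i : ℕ} {f : ℕ → OnePoint ℂ} (hf : IsGeodesicWalk d n f)
    (hi : i + 1 < n) : ¬FareyAdj d (f i) (f n) := by
  intro hadj
  have := hf.le_add_of_isWalk (i := i) (l := 1) (g := fun k => if k = 0 then f i else f n)
    (by omega) (fun k hk => by simpa [Nat.lt_one_iff.mp hk] using hadj) (by simp) (by simp)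
  omega

lemma IsGeodesicWalk.not_fareyAdj_fareyAdj {n i : ℕ} {f : ℕ → OnePoint ℂ}
    (hf : IsGeodesicWalk d n f) (hi : i + 2 < n) (w : OnePoint ℂ) :
    ¬(FareyAdj d (f i) w ∧ FareyAdj d w (f n)) := by
  rintro ⟨hadj₁, hadj₂⟩
  have := hf.le_add_of_isWalk (i := i) (l := 2)
    (g := fun k => if k = 0 then f i else if k = 1 then w else f n) (by omega)
    (fun k hk => by interval_cases k <;> simpa) (by simp) (by simp)
  omega

end Walks

section Shortcuts

variable {d : ℕ} {a : ℕ → ℂ}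

lemma fareyAdj_cfWalk0 {j k : ℕ} (hjk : j ≤ k) (ha : ∀ i < k, a i ∈ ringInt d)
    (h : ‖cfDet a j k‖ = 1) : FareyAdj d (cfWalk0 a j) (cfWalk0 a k) := by
  obtain ⟨hNj, hDj⟩ := convNum_convDen_mem_ringInt a j
    fun i hi => ha i (hi.trans_le hjk)
  obtain ⟨hNk, hDk⟩ := convNum_convDen_mem_ringInt a k ha
  rw [cfWalk0_eq_divC, cfWalk0_eq_divC]
  exact fareyAdj_divC hNj hDj hNk hDk h

/-- The detour passes through `(ζ pₖ + pₖ₋₁)/(ζ qₖ + qₖ₋₁)`, in the indexing of `cfP0`, `cfQ0`. -/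
lemma exists_fareyAdj_fareyAdj_cfWalk0_add_three {k : ℕ} (ha : ∀ i < k + 3, a i ∈ ringInt d)
    {ζ : ℂ} (hζ : IsUnitIn d ζ) (h₁ : a (k + 1) = 2 * ζ) (h₂ : a (k + 2) = -2 * conj ζ) :
    ∃ w, FareyAdj d (cfWalk0 a k) w ∧ FareyAdj d w (cfWalk0 a (k + 3)) := by
  have hζζ : ζ * conj ζ = 1 := by rw [RCLike.mul_conj, hζ.norm_eq_one]; norm_num
  obtain ⟨hN₀, hD₀⟩ := convNum_convDen_mem_ringInt a k
    fun i hi => ha i (by omega)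
  obtain ⟨hN₁, hD₁⟩ := convNum_convDen_mem_ringInt a (k + 1)
    fun i hi => ha i (by omega)
  obtain ⟨hN₃, hD₃⟩ := convNum_convDen_mem_ringInt a (k + 3) ha
  have hζR : ζ ∈ ringIntSubring d := hζ.1
  have hwN : ζ * convNum a (k + 1) + convNum a k ∈ ringInt d := add_mem (mul_mem hζR hN₁) hN₀
  have hwD : ζ * convDen a (k + 1) + convDen a k ∈ ringInt d := add_mem (mul_mem hζR hD₁) hD₀
  have hdet := cfDet_add_one a k
  simp only [cfDet] at hdet
  refine ⟨divC (ζ * convNum a (k + 1) + convNum a k) (ζ * convDen a (k + 1) + convDen a k),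
    ?_, ?_⟩ <;> rw [cfWalk0_eq_divC]
  · refine fareyAdj_divC hN₀ hD₀ hwN hwD ?_
    rw [show convNum a k * (ζ * convDen a (k + 1) + convDen a k) -
        (ζ * convNum a (k + 1) + convNum a k) * convDen a k = ζ * (-1) ^ k by
      linear_combination ζ * hdet]
    simp [hζ.norm_eq_one]
  · refine fareyAdj_divC hwN hwD hN₃ hD₃ ?_
    rw [convNum_add_two, convDen_add_two, convNum_add_two, convDen_add_two, h₁, h₂]
    rw [show (ζ * convNum a (k + 1) + convNum a k) *
          (-2 * conj ζ * (2 * ζ * convDen a (k + 1) + convDen a k) + convDen a (k + 1)) -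
        (-2 * conj ζ * (2 * ζ * convNum a (k + 1) + convNum a k) + convNum a (k + 1)) *
          (ζ * convDen a (k + 1) + convDen a k) = -(-1) ^ k by
      linear_combination (1 - 2 * conj ζ * ζ) * hdet - 2 * (-1) ^ k * hζζ]
    simp

end Shortcuts

theorem geodesic_expansion_digit_restrictions_general (d : ℕ)
    (N : ℕ) (a : ℕ → ℂ) (ha : ∀ k ≤ N, a k ∈ ringInt d)
    (hgeo : ∀ n ≤ N, IsGeodesicWalk d (n + 1) (cfWalk0 a)) :
    ∀ n, 1 ≤ n → n ≤ N →
      ‖a n‖ ≠ 1 ∧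
      (n + 1 ≤ N →
        (‖a n‖ = Real.sqrt 2 → a (n + 1) ≠ -(starRingEnd ℂ) (a n)) ∧
        (∀ ζ : ℂ, IsUnitIn d ζ → a n = 2 * ζ →
          a (n + 1) ≠ -2 * (starRingEnd ℂ) ζ)) := by
  intro n hn hnN
  obtain ⟨k, rfl⟩ := Nat.exists_eq_add_of_le' hn
  refine ⟨fun h => ?_, fun hN => ⟨fun h₁ h₂ => ?_, fun ζ hζ h₁ h₂ => ?_⟩⟩
  · refine (hgeo (k + 1) hnN).not_fareyAdj (i := k) (by omega)
      (fareyAdj_cfWalk0 (by omega) (fun i hi => ha i (by omega)) ?_)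
    simp [cfDet_add_two, h]
  · refine (hgeo (k + 2) hN).not_fareyAdj (i := k) (by omega)
      (fareyAdj_cfWalk0 (by omega) (fun i hi => ha i (by omega)) ?_)
    have hprod : a (k + 1) * a (k + 2) = -2 := by
      rw [h₂, mul_neg, Complex.mul_conj, Complex.normSq_eq_norm_sq, h₁, Real.sq_sqrt zero_le_two]
      norm_num
    rw [cfDet_add_three, hprod]
    norm_num
  · obtain ⟨w, hw⟩ := exists_fareyAdj_fareyAdj_cfWalk0_add_three
      (fun i hi => ha i (by omega)) hζ h₁ h₂
    exact (hgeo (k + 2) hN).not_fareyAdj_fareyAdj (i := k) (by omega) w hw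

/-- Let `d ∈ {1,2,3,7,11}` and let `[a₀; a₁, …, a_N]` with
all `a_k ∈ ℤ[ω_d]` be a geodesic continued fraction expansion (every walk
`∞ → p₀/q₀ → ⋯ → p_n/q_n` along its convergents is a geodesic path in `E_d`).
Then for every `n ≥ 1` for which the relevant partial quotients exist:
(i) `|a_n| ≠ 1`; (ii) if `|a_n| = √2` then `a_{n+1} ≠ −conj(a_n)`;
(iii) if `a_n = 2ζ` for a unit `ζ` of `ℤ[ω_d]` then `a_{n+1} ≠ −2·conj(ζ)`. -/
theorem geodesic_expansion_digit_restrictions (d : ℕ) (hd : d ∈ ({1, 2, 3, 7, 11} : Set ℕ))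
    (N : ℕ) (a : ℕ → ℂ) (ha : ∀ k ≤ N, a k ∈ ringInt d)
    (hgeo : ∀ n ≤ N, IsGeodesicWalk d (n + 1) (cfWalk0 a)) :
    ∀ n, 1 ≤ n → n ≤ N →
      ‖a n‖ ≠ 1 ∧
      (n + 1 ≤ N →
        (‖a n‖ = Real.sqrt 2 → a (n + 1) ≠ -(starRingEnd ℂ) (a n)) ∧
        (∀ ζ : ℂ, IsUnitIn d ζ → a n = 2 * ζ →
          a (n + 1) ≠ -2 * (starRingEnd ℂ) ζ)) :=
  geodesic_expansion_digit_restrictions_general d N a ha hgeo
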